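/- The metric G̃ on P̃ = ℝ^{2n+2} is an indefinite Einstein metric: its Ricci tensor satisfies Ric(G̃) = ((n+2)/2) · G̃ at every point (componentwise: R_{p_i p_j} = 0, R_{p_i x^j} = ((n+2)/2) δ_{ij}, R_{x^i x^j} = ((n+2)/2) p_i p_j), and its scalar curvature is the constant 𝓡(G̃) = (n+1)(n+2). -/

import Mathlib

/-!
Only the block `G̃_{xx} = p pᵀ` varies, and only with `p`, so the Christoffel symbols are
polynomials in `p` (`christoffel`). Since `det G̃ = ±1` is constant, the contractions `Γ^μ_{μγ}`
vanish and the Ricci tensor reduces to `∂_μ Γ^μ_{βα} - Γ^μ_{βγ} Γ^γ_{μα}`. The quadratic term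
survives only on the `xx` block, where it is `(n+4)/2 · p_b p_c` against a divergence of
`(n+3) p_b p_c`; on the mixed blocks the divergence alone gives `(n+2)/2 · δ_{bc}`. Contracting
`Ric = (n+2)/2 · G̃` with `G̃⁻¹` then gives `𝓡 = (n+2)/2 · (2n+2)`.
-/

abbrev Idx2 (n : ℕ) : Type := Fin (n + 1) ⊕ Fin (n + 1)
abbrev Pt2 (n : ℕ) : Type := Idx2 n → ℝ

/-- The lifted metric `G̃ = [[0, I], [I, p pᵀ]]`, block ordering `(p; x)`. -/
def Gt (n : ℕ) (m : Pt2 n) : Matrix (Idx2 n) (Idx2 n) ℝ :=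
  Matrix.of fun a b =>
    match a, b with
    | Sum.inl _, Sum.inl _ => 0
    | Sum.inl i, Sum.inr j => if i = j then 1 else 0
    | Sum.inr i, Sum.inl j => if i = j then 1 else 0
    | Sum.inr i, Sum.inr j => m (Sum.inl i) * m (Sum.inl j)

/-- Partial derivative `∂_a f (m)` of a scalar function on `P̃`. -/
noncomputable def pd {n : ℕ} (f : Pt2 n → ℝ) (m : Pt2 n) (a : Idx2 n) : ℝ :=
  fderiv ℝ f m (Pi.single a 1)

/-- Christoffel symbols `Γ^α_{βγ} = ½ Σ_s G̃^{αs}(∂_β G̃_{γs} + ∂_γ G̃_{βs} - ∂_s G̃_{βγ})`. -/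
noncomputable def ChristoffelT (n : ℕ) (m : Pt2 n) (α β γ : Idx2 n) : ℝ :=
  (1 / 2) * ∑ s, (Gt n m)⁻¹ α s *
    (pd (fun m' => Gt n m' γ s) m β + pd (fun m' => Gt n m' β s) m γ
      - pd (fun m' => Gt n m' β γ) m s)

/-- The Ricci tensor of `G̃`. -/
noncomputable def RicciT (n : ℕ) (m : Pt2 n) (α β : Idx2 n) : ℝ :=
  (∑ μ, pd (fun m' => ChristoffelT n m' μ β α) m μ)
    - (∑ μ, pd (fun m' => ChristoffelT n m' μ μ α) m β)
    + (∑ μ, ∑ γ, ChristoffelT n m μ μ γ * ChristoffelT n m γ β α)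
    - (∑ μ, ∑ γ, ChristoffelT n m μ β γ * ChristoffelT n m γ μ α)

/-- The scalar curvature `𝓡 = Σ G̃^{αβ} R_{βα}`. -/
noncomputable def scalarCurvT (n : ℕ) (m : Pt2 n) : ℝ :=
  ∑ α, ∑ β, (Gt n m)⁻¹ α β * RicciT n m β α

open Finset Matrix

section Inverse

variable (n : ℕ) (m : Pt2 n)

theorem Gt_eq_fromBlocks :
    Gt n m = fromBlocks 0 1 1 (vecMulVec (fun i => m (.inl i)) (fun i => m (.inl i))) := by
  ext (i | i) (j | j) <;> simp [Gt, one_apply, vecMulVec_apply]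

def GtInv : Matrix (Idx2 n) (Idx2 n) ℝ :=
  fromBlocks (-vecMulVec (fun i => m (.inl i)) (fun i => m (.inl i))) 1 1 0

theorem Gt_mul_GtInv : Gt n m * GtInv n m = 1 := by
  simp [Gt_eq_fromBlocks, GtInv, fromBlocks_multiply, fromBlocks_one]

theorem Gt_inv : (Gt n m)⁻¹ = GtInv n m :=
  inv_eq_right_inv (Gt_mul_GtInv n m)

theorem GtInv_mul_Gt : GtInv n m * Gt n m = 1 :=
  mul_eq_one_comm.mp (Gt_mul_GtInv n m)

end Inverse

section PartialDerivative

variable {n : ℕ} {f g : Pt2 n → ℝ} {m : Pt2 n} (a : Idx2 n)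

theorem pd_const (r : ℝ) : pd (fun _ => r) m a = 0 := by
  simp [pd]

theorem pd_apply (c : Idx2 n) : pd (fun m' => m' c) m a = if c = a then 1 else 0 := by
  rw [pd, fderiv_apply differentiableAt_id]; simp [Pi.single_apply]

theorem pd_add (hf : DifferentiableAt ℝ f m) (hg : DifferentiableAt ℝ g m) :
    pd (fun m' => f m' + g m') m a = pd f m a + pd g m a := by
  simp [pd, fderiv_fun_add hf hg]

theorem pd_mul (hf : DifferentiableAt ℝ f m) (hg : DifferentiableAt ℝ g m) :
    pd (fun m' => f m' * g m') m a = pd f m a * g m + f m * pd g m a := by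
  simp [pd, fderiv_fun_mul hf hg]; ring

theorem pd_sum {ι : Type*} (s : Finset ι) {F : ι → Pt2 n → ℝ}
    (hF : ∀ i ∈ s, DifferentiableAt ℝ (F i) m) :
    pd (fun m' => ∑ i ∈ s, F i m') m a = ∑ i ∈ s, pd (F i) m a := by
  simp [pd, fderiv_fun_sum hF]

end PartialDerivative

noncomputable def christoffel (n : ℕ) (m : Pt2 n) : Idx2 n → Idx2 n → Idx2 n → ℝ
  | .inl i, .inl b, .inr c =>
      2⁻¹ * ((if b = c then 1 else 0) * m (.inl i) + (if b = i then 1 else 0) * m (.inl c))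
  | .inl i, .inr b, .inl c =>
      2⁻¹ * ((if c = b then 1 else 0) * m (.inl i) + (if c = i then 1 else 0) * m (.inl b))
  | .inl i, .inr b, .inr c => m (.inl i) * m (.inl b) * m (.inl c)
  | .inr i, .inr b, .inr c =>
      -2⁻¹ * ((if i = b then 1 else 0) * m (.inl c) + (if i = c then 1 else 0) * m (.inl b))
  | _, _, _ => 0

section Christoffel

variable {n : ℕ} (m : Pt2 n)

theorem pd_Gt_inl_left (i : Fin (n + 1)) (b c : Idx2 n) :
    pd (fun m' => Gt n m' (.inl i) b) m c = 0 := by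
  cases b <;> simp [Gt, pd_const]

theorem pd_Gt_inl_right (i : Fin (n + 1)) (a c : Idx2 n) :
    pd (fun m' => Gt n m' a (.inl i)) m c = 0 := by
  cases a <;> simp [Gt, pd_const]

theorem pd_Gt_inr_inr (i j : Fin (n + 1)) (c : Idx2 n) :
    pd (fun m' => Gt n m' (.inr i) (.inr j)) m c =
      (if .inl i = c then 1 else 0) * m (.inl j) + m (.inl i) * (if .inl j = c then 1 else 0) := by
  simp (disch := fun_prop) only [Gt, of_apply, pd_mul, pd_apply]

theorem ChristoffelT_eq_christoffel (α β γ : Idx2 n) :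
    ChristoffelT n m α β γ = christoffel n m α β γ := by
  rw [ChristoffelT, Gt_inv]
  rcases α with i | i <;> rcases β with b | b <;> rcases γ with c | c <;>
    simp [Fintype.sum_sum_type, GtInv, christoffel, pd_Gt_inl_left, pd_Gt_inl_right,
      pd_Gt_inr_inr, one_apply, vecMulVec_apply, mul_add, sum_add_distrib, mul_ite, eq_comm]
  all_goals (try split_ifs) <;> ring

theorem differentiable_christoffel (α β γ : Idx2 n) :
    Differentiable ℝ (fun m => christoffel n m α β γ) := by
  rcases α with i | i <;> rcases β with b | b <;> rcases γ with c | c <;>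
    simp only [christoffel] <;> fun_prop

theorem sum_christoffel_self_eq_zero (γ : Idx2 n) : ∑ μ, christoffel n m μ μ γ = 0 := by
  rcases γ with c | c <;>
    simp [Fintype.sum_sum_type, christoffel, ← mul_sum, sum_add_distrib, add_comm]

theorem RicciT_eq_sum_pd_sub_sum_mul (α β : Idx2 n) :
    RicciT n m α β = ∑ μ, pd (fun m' => christoffel n m' μ β α) m μ -
      ∑ μ, ∑ γ, christoffel n m μ β γ * christoffel n m γ μ α := by
  have hdiff μ : μ ∈ univ → DifferentiableAt ℝ (fun m' => christoffel n m' μ μ α) m :=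
    fun _ => (differentiable_christoffel μ μ α).differentiableAt
  simp only [RicciT, ChristoffelT_eq_christoffel]
  rw [← pd_sum _ _ hdiff, sum_comm (γ := Idx2 n)]
  simp only [← sum_mul, sum_christoffel_self_eq_zero, zero_mul, sum_const_zero, pd_const]
  ring

end Christoffel

section Ricci

variable (n : ℕ) (m : Pt2 n)

theorem RicciT_inl_inl (i j : Fin (n + 1)) : RicciT n m (.inl i) (.inl j) = 0 := by
  have hdiv : ∑ μ, pd (fun m' => christoffel n m' μ (.inl j) (.inl i)) m μ = 0 := by
    simp [christoffel, pd_const]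
  have hquad : ∑ μ, ∑ γ, christoffel n m μ (.inl j) γ * christoffel n m γ μ (.inl i) = 0 := by
    simp [Fintype.sum_sum_type, christoffel]
  rw [RicciT_eq_sum_pd_sub_sum_mul, hdiv, hquad, sub_zero]

theorem RicciT_inl_inr (i j : Fin (n + 1)) :
    RicciT n m (.inl i) (.inr j) = ((n + 2 : ℝ) / 2) * (if i = j then 1 else 0) := by
  have hdiv : ∑ μ, pd (fun m' => christoffel n m' μ (.inr j) (.inl i)) m μ =
      ((n + 2 : ℝ) / 2) * (if i = j then 1 else 0) := by
    simp only [Fintype.sum_sum_type, christoffel]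
    simp (disch := fun_prop) only [pd_const, pd_add, pd_mul, pd_apply]
    rcases eq_or_ne i j with rfl | hij
    · simp +contextual [← mul_sum, sum_add_distrib]
      ring
    · simp +contextual [hij]
  have hquad : ∑ μ, ∑ γ, christoffel n m μ (.inr j) γ * christoffel n m γ μ (.inl i) = 0 := by
    simp [Fintype.sum_sum_type, christoffel]
  rw [RicciT_eq_sum_pd_sub_sum_mul, hdiv, hquad, sub_zero]

theorem RicciT_inr_inl (i j : Fin (n + 1)) :
    RicciT n m (.inr i) (.inl j) = ((n + 2 : ℝ) / 2) * (if i = j then 1 else 0) := by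
  have hdiv : ∑ μ, pd (fun m' => christoffel n m' μ (.inl j) (.inr i)) m μ =
      ((n + 2 : ℝ) / 2) * (if i = j then 1 else 0) := by
    simp only [Fintype.sum_sum_type, christoffel]
    simp (disch := fun_prop) only [pd_const, pd_add, pd_mul, pd_apply]
    rcases eq_or_ne i j with rfl | hij
    · simp +contextual [← mul_sum, sum_add_distrib]
      ring
    · simp +contextual [hij, hij.symm]
  have hquad : ∑ μ, ∑ γ, christoffel n m μ (.inl j) γ * christoffel n m γ μ (.inr i) = 0 := by
    simp [Fintype.sum_sum_type, christoffel]
  rw [RicciT_eq_sum_pd_sub_sum_mul, hdiv, hquad, sub_zero]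

theorem RicciT_inr_inr (i j : Fin (n + 1)) :
    RicciT n m (.inr i) (.inr j) = ((n + 2 : ℝ) / 2) * (m (.inl i) * m (.inl j)) := by
  have hdiv : ∑ μ, pd (fun m' => christoffel n m' μ (.inr j) (.inr i)) m μ =
      (n + 3) * (m (.inl i) * m (.inl j)) := by
    simp only [Fintype.sum_sum_type, christoffel]
    simp (disch := fun_prop) only [pd_const, pd_add, pd_mul, pd_apply]
    simp [mul_add, add_mul, sum_add_distrib]
    ring
  have hquad : ∑ μ, ∑ γ, christoffel n m μ (.inr j) γ * christoffel n m γ μ (.inr i) =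
      (n + 4) / 2 * (m (.inl i) * m (.inl j)) := by
    simp [Fintype.sum_sum_type, christoffel, mul_add, add_mul, sum_add_distrib, mul_ite, ite_mul]
    ring
  rw [RicciT_eq_sum_pd_sub_sum_mul, hdiv, hquad]
  ring

theorem RicciT_eq_smul_Gt (α β : Idx2 n) : RicciT n m α β = ((n + 2 : ℝ) / 2) * Gt n m α β := by
  rcases α with i | i <;> rcases β with j | j <;>
    simp [Gt, RicciT_inl_inl, RicciT_inl_inr, RicciT_inr_inl, RicciT_inr_inr]

theorem scalarCurvT_eq : scalarCurvT n m = (n + 1 : ℝ) * (n + 2 : ℝ) := by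
  have htrace : ∑ α, ∑ β, (Gt n m)⁻¹ α β * Gt n m β α = 2 * (n + 1) := by
    simp only [← mul_apply, Gt_inv, GtInv_mul_Gt, one_apply_eq, sum_const, card_univ,
      Fintype.card_sum, Fintype.card_fin, nsmul_eq_mul, mul_one]
    push_cast
    ring
  simp only [scalarCurvT, RicciT_eq_smul_Gt, mul_left_comm _ ((n + 2 : ℝ) / 2), ← mul_sum, htrace]
  ring

end Ricci

theorem lifted_metric_is_einstein (n : ℕ) (m : Pt2 n) :
    (∀ α β, RicciT n m α β = ((n + 2 : ℝ) / 2) * Gt n m α β) ∧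
    (∀ i j, RicciT n m (Sum.inl i) (Sum.inl j) = 0) ∧
    (∀ i j : Fin (n + 1), RicciT n m (Sum.inl i) (Sum.inr j) =
      ((n + 2 : ℝ) / 2) * (if i = j then 1 else 0)) ∧
    (∀ i j, RicciT n m (Sum.inr i) (Sum.inr j) =
      ((n + 2 : ℝ) / 2) * (m (Sum.inl i) * m (Sum.inl j))) ∧
    scalarCurvT n m = (n + 1 : ℝ) * (n + 2 : ℝ) :=
  ⟨RicciT_eq_smul_Gt n m, RicciT_inl_inl n m, RicciT_inl_inr n m, RicciT_inr_inr n m,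
    scalarCurvT_eq n m⟩
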